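/- Let d be a positive integer and let K be a compact subset of the open positive orthant (0, ∞)^d. Then there exists a constant L > 0 such that sup_{q ∈ ℝ} |H(q; λ) − H(q; λ')| ≤ L ‖λ − λ'‖ for all λ, λ' ∈ K; that is, the mixture cumulative distribution function is Lipschitz in the weight vector, uniformly in the argument q, on compact subsets of the positive orthant. -/

import Mathlib

open MeasureTheory ProbabilityTheory Filter

/-- The product of `d` independent standard normal distributions. -/
noncomputable def stdGaussPi (d : ℕ) : Measure (Fin d → ℝ) :=
  Measure.pi fun _ => gaussianReal 0 1

/-- `mixCDF d lam q = H(q; λ) = P(∑ j, λ_j Z_j² ≤ q)` for `Z_1, …, Z_d` IID standard normal. -/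
noncomputable def mixCDF (d : ℕ) (lam : Fin d → ℝ) (q : ℝ) : ℝ :=
  (stdGaussPi d {z | ∑ j, lam j * z j ^ 2 ≤ q}).toReal

/-!
Raising one weight from `λᵢ` to `t` removes from the event `{∑ λⱼ Zⱼ² ≤ q}` a set whose slices,
for fixed values of the other coordinates, are `{x | λᵢ x² ≤ c < t x²}`: two intervals of total
length `2 (√(c/λᵢ) - √(c/t))` on which the Gaussian density is at most `exp (-c/(2t))`. Since
`s exp (-s²/2) ≤ 1`, this gives the bound `2 (t - λᵢ) / λᵢ`, independent of `c`. Hence `H` is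
Lipschitz in each weight, with constant `2/m` while all weights stay above `m > 0`; changing the
weights one at a time gives the constant `2d/m`, and compactness of `K` supplies `m`.
-/

open Real Function

theorem norm_sub_le_card_mul_of_update {ι E F : Type*} [Fintype ι] [DecidableEq ι]
    [SeminormedAddCommGroup E] [SeminormedAddCommGroup F] {f : (ι → E) → F} {S : Set E}
    {L : ℝ} (hL : 0 ≤ L)
    (hf : ∀ x, (∀ i, x i ∈ S) → ∀ i, ∀ t ∈ S, ‖f (update x i t) - f x‖ ≤ L * ‖t - x i‖)
    {x y : ι → E} (hx : ∀ i, x i ∈ S) (hy : ∀ i, y i ∈ S) :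
    ‖f y - f x‖ ≤ Fintype.card ι * L * ‖y - x‖ := by
  suffices key : ∀ s : Finset ι, ‖f (s.piecewise y x) - f x‖ ≤ s.card * L * ‖y - x‖ by
    simpa using key Finset.univ
  intro s
  induction s using Finset.induction_on with
  | empty => simp
  | insert i s hi ih =>
    set z := s.piecewise y x
    have hz : ∀ j, z j ∈ S := fun j => by
      by_cases hj : j ∈ s <;> simp [z, hj, hx, hy]
    have hzi : z i = x i := s.piecewise_eq_of_notMem _ _ hi
    have hstep := hf z hz i (y i) (hy i)
    rw [hzi] at hstep
    calc ‖f ((insert i s).piecewise y x) - f x‖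
        ≤ ‖f (update z i (y i)) - f z‖ + ‖f z - f x‖ := by
          rw [Finset.piecewise_insert]; exact norm_sub_le_norm_sub_add_norm_sub _ _ _
      _ ≤ L * ‖y - x‖ + s.card * L * ‖y - x‖ := by
          gcongr
          exact hstep.trans (by gcongr; exact norm_le_pi_norm (y - x) i)
      _ = (insert i s).card * L * ‖y - x‖ := by
          rw [Finset.card_insert_of_notMem hi]; push_cast; ring

theorem IsCompact.exists_pos_forall_le_apply {ι : Type*} [Fintype ι] {K : Set (ι → ℝ)}
    (hK : IsCompact K) (hpos : ∀ x ∈ K, ∀ i, 0 < x i) :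
    ∃ m > 0, ∀ x ∈ K, ∀ i, m ≤ x i := by
  obtain ⟨C, hC⟩ := hK.exists_bound_of_continuousOn (f := fun x i => (x i)⁻¹)
    (continuousOn_pi.2 fun i =>
      (continuous_apply i).continuousOn.inv₀ fun x hx => (hpos x hx i).ne')
  refine ⟨(max C 1)⁻¹, by positivity, fun x hx i => ?_⟩
  rw [inv_le_comm₀ (by positivity) (hpos x hx i)]
  calc (x i)⁻¹ ≤ ‖(x i)⁻¹‖ := Real.le_norm_self _
    _ ≤ ‖fun j => (x j)⁻¹‖ := norm_le_pi_norm (fun j => (x j)⁻¹) i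
    _ ≤ max C 1 := (hC x hx).trans (le_max_left _ _)

theorem mul_exp_neg_sq_div_two_le_one (t : ℝ) : t * exp (-t ^ 2 / 2) ≤ 1 := by
  rw [neg_div, exp_neg, ← div_eq_mul_inv, div_le_one (exp_pos _)]
  nlinarith [add_one_le_exp (t ^ 2 / 2), sq_nonneg (t - 1)]

theorem gaussianReal_le_exp_mul_volume {s : Set ℝ} {u : ℝ} (h : ∀ x ∈ s, u ^ 2 ≤ x ^ 2) :
    gaussianReal 0 1 s ≤ ENNReal.ofReal (exp (-u ^ 2 / 2)) * volume s := by
  rw [gaussianReal_of_var_ne_zero 0 one_ne_zero, withDensity_apply', ← setLIntegral_const]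
  refine setLIntegral_mono measurable_const fun x hx => ENNReal.ofReal_le_ofReal ?_
  have hpi : (1 : ℝ) ≤ √(2 * π * (1 : NNReal)) := by
    rw [NNReal.coe_one, mul_one, one_le_sqrt]; linarith [pi_gt_three]
  calc gaussianPDFReal 0 1 x ≤ 1 * exp (-x ^ 2 / 2) := by
        simp only [gaussianPDFReal, sub_zero, NNReal.coe_one, mul_one] at hpi ⊢
        gcongr
        exact inv_le_one_of_one_le₀ hpi
    _ ≤ exp (-u ^ 2 / 2) := by
        rw [one_mul, exp_le_exp]; linarith [h x hx]

theorem sqrt_div_sub_sqrt_div_mul_exp_le {a b c : ℝ} (ha : 0 < a) (hab : a ≤ b) (hc : 0 ≤ c) :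
    (√(c / a) - √(c / b)) * exp (-√(c / b) ^ 2 / 2) ≤ (b - a) / a := by
  set t := √(c / b)
  have hba : 1 ≤ b / a := (one_le_div ha).2 hab
  have hta : √(c / a) = t * √(b / a) := by
    rw [← sqrt_mul (div_nonneg hc (ha.le.trans hab))]
    congr 1; field_simp [(ha.trans_le hab).ne']
  calc (√(c / a) - t) * exp (-t ^ 2 / 2) = (√(b / a) - 1) * (t * exp (-t ^ 2 / 2)) := by
        rw [hta]; ring
    _ ≤ (√(b / a) - 1) * 1 := by
        gcongr
        · linarith [one_le_sqrt.2 hba]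
        · exact mul_exp_neg_sq_div_two_le_one t
    _ ≤ b / a - 1 := by linarith [sqrt_le_self_iff.2 (Or.inr hba)]
    _ = (b - a) / a := by field_simp

theorem gaussianReal_setOf_sq_le_diff_le {a b c : ℝ} (ha : 0 < a) (hab : a ≤ b) :
    gaussianReal 0 1 ({x | a * x ^ 2 ≤ c} \ {x | b * x ^ 2 ≤ c})
      ≤ ENNReal.ofReal (2 * ((b - a) / a)) := by
  have hb : 0 < b := ha.trans_le hab
  rcases lt_or_ge c 0 with hc | hc
  · have hempty : {x : ℝ | a * x ^ 2 ≤ c} = ∅ :=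
      Set.eq_empty_of_forall_notMem fun x (hx : a * x ^ 2 ≤ c) => by nlinarith [sq_nonneg x]
    simp [hempty]
  set ta := √(c / a)
  set tb := √(c / b)
  have htab : 0 ≤ ta - tb := sub_nonneg.2 (sqrt_le_sqrt (div_le_div_of_nonneg_left hc ha hab))
  have htb : tb ^ 2 = c / b := sq_sqrt (div_nonneg hc hb.le)
  have hsq : ∀ x ∈ {x | a * x ^ 2 ≤ c} \ {x | b * x ^ 2 ≤ c}, c / b ≤ x ^ 2 ∧ x ^ 2 ≤ c / a := by
    rintro x ⟨hxa, hxb⟩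
    simp only [Set.mem_ofPred_eq, not_le] at hxa hxb
    exact ⟨(div_le_iff₀ hb).2 (by linarith), (le_div_iff₀ ha).2 (by linarith)⟩
  have hsub : {x | a * x ^ 2 ≤ c} \ {x | b * x ^ 2 ≤ c} ⊆ Set.Icc (-ta) (-tb) ∪ Set.Icc tb ta := by
    intro x hx
    obtain ⟨hlo, hhi⟩ := hsq x hx
    have hxa : |x| ≤ ta := abs_le_sqrt hhi
    have hxb : tb ≤ |x| := by rw [← sqrt_sq_eq_abs]; exact sqrt_le_sqrt hlo
    rcases le_total 0 x with h0 | h0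
    · rw [abs_of_nonneg h0] at hxa hxb; exact Or.inr ⟨hxb, hxa⟩
    · rw [abs_of_nonpos h0] at hxa hxb; exact Or.inl ⟨by linarith, by linarith⟩
  calc gaussianReal 0 1 ({x | a * x ^ 2 ≤ c} \ {x | b * x ^ 2 ≤ c})
      ≤ ENNReal.ofReal (exp (-tb ^ 2 / 2)) * volume (Set.Icc (-ta) (-tb) ∪ Set.Icc tb ta) :=
        (gaussianReal_le_exp_mul_volume fun x hx => htb ▸ (hsq x hx).1).trans (by gcongr)
    _ ≤ ENNReal.ofReal (exp (-tb ^ 2 / 2))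
          * (ENNReal.ofReal (ta - tb) + ENNReal.ofReal (ta - tb)) := by
        grw [measure_union_le]
        simp only [Real.volume_Icc, sub_neg_eq_add, neg_add_eq_sub, le_refl]
    _ = ENNReal.ofReal (2 * ((ta - tb) * exp (-tb ^ 2 / 2))) := by
        rw [← ENNReal.ofReal_add htab htab, ← ENNReal.ofReal_mul (exp_pos _).le]
        ring_nf
    _ ≤ ENNReal.ofReal (2 * ((b - a) / a)) := by
        gcongr
        exact sqrt_div_sub_sqrt_div_mul_exp_le ha hab hc

instance (d : ℕ) : IsProbabilityMeasure (stdGaussPi d) := by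
  unfold stdGaussPi; infer_instance

theorem setOf_sum_update_mul_sq_le_subset {ι : Type*} [Fintype ι] [DecidableEq ι]
    (lam : ι → ℝ) (i : ι) {t : ℝ} (ht : lam i ≤ t) (q : ℝ) :
    {z : ι → ℝ | ∑ j, update lam i t j * z j ^ 2 ≤ q} ⊆ {z | ∑ j, lam j * z j ^ 2 ≤ q} := by
  intro z (hz : _ ≤ q)
  refine le_trans (Finset.sum_le_sum fun j _ => ?_) hz
  rcases eq_or_ne j i with rfl | hj
  · rw [update_self]; exact mul_le_mul_of_nonneg_right ht (sq_nonneg _)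
  · rw [update_of_ne hj]

theorem stdGaussPi_diff_update_le {n : ℕ} (lam : Fin (n + 1) → ℝ) (i : Fin (n + 1)) {t : ℝ}
    (hpos : 0 < lam i) (ht : lam i ≤ t) (q : ℝ) :
    stdGaussPi (n + 1) ({z | ∑ j, lam j * z j ^ 2 ≤ q} \ {z | ∑ j, update lam i t j * z j ^ 2 ≤ q})
      ≤ ENNReal.ofReal (2 * ((t - lam i) / lam i)) := by
  set rest : (Fin n → ℝ) → ℝ := fun y => ∑ j, lam (i.succAbove j) * y j ^ 2
  set B : Set (ℝ × (Fin n → ℝ)) :=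
    {p | lam i * p.1 ^ 2 ≤ q - rest p.2} \ {p | t * p.1 ^ 2 ≤ q - rest p.2}
  have hB : MeasurableSet B := by
    have hrest : Measurable rest := by fun_prop
    exact (measurableSet_le (by fun_prop) (by fun_prop)).diff
      (measurableSet_le (by fun_prop) (by fun_prop))
  have hpre : MeasurableEquiv.piFinSuccAbove (fun _ => ℝ) i ⁻¹' B =
      {z | ∑ j, lam j * z j ^ 2 ≤ q} \ {z | ∑ j, update lam i t j * z j ^ 2 ≤ q} := by
    ext z
    simp [B, rest, Fin.sum_univ_succAbove _ i, Fin.removeNth, le_sub_iff_add_le]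
  rw [← hpre, stdGaussPi,
    (measurePreserving_piFinSuccAbove (fun _ => gaussianReal 0 1) i).measure_preimage
      hB.nullMeasurableSet, Measure.prod_apply_symm hB]
  calc ∫⁻ y, gaussianReal 0 1 ((fun x => (x, y)) ⁻¹' B) ∂(Measure.pi fun _ => gaussianReal 0 1)
      ≤ ∫⁻ _, ENNReal.ofReal (2 * ((t - lam i) / lam i)) ∂(Measure.pi fun _ => gaussianReal 0 1) :=
        lintegral_mono fun y => gaussianReal_setOf_sq_le_diff_le (c := q - rest y) hpos ht
    _ = ENNReal.ofReal (2 * ((t - lam i) / lam i)) := by simp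

theorem abs_mixCDF_update_sub_le {d : ℕ} (lam : Fin d → ℝ) (i : Fin d) {m t : ℝ} (hm : 0 < m)
    (hlam : m ≤ lam i) (ht : m ≤ t) (q : ℝ) :
    |mixCDF d (update lam i t) q - mixCDF d lam q| ≤ 2 / m * |t - lam i| := by
  obtain ⟨n, rfl⟩ := Nat.exists_eq_add_one_of_ne_zero i.pos.ne'
  wlog hle : lam i ≤ t generalizing lam t
  · have := this (lam := update lam i t) (t := lam i) hlam (by simpa using ht)
      (by simpa using (not_le.1 hle).le)
    rwa [update_idem, update_eq_self, update_self, abs_sub_comm, abs_sub_comm (lam i)] at this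
  have hpos : 0 < lam i := hm.trans_le hlam
  have hdiff : mixCDF (n + 1) lam q - mixCDF (n + 1) (update lam i t) q =
      (stdGaussPi (n + 1)).real
        ({z | ∑ j, lam j * z j ^ 2 ≤ q} \ {z | ∑ j, update lam i t j * z j ^ 2 ≤ q}) :=
    (measureReal_sdiff (setOf_sum_update_mul_sq_le_subset lam i hle q)
      (measurableSet_le (by fun_prop) (by fun_prop))).symm
  have hbound :=
    ENNReal.toReal_mono ENNReal.ofReal_ne_top (stdGaussPi_diff_update_le lam i hpos hle q)
  rw [ENNReal.toReal_ofReal (by positivity), ← measureReal_def, ← hdiff] at hbound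
  rw [abs_sub_comm, abs_of_nonneg (hdiff ▸ measureReal_nonneg), abs_of_nonneg (sub_nonneg.2 hle)]
  calc _ ≤ 2 * ((t - lam i) / lam i) := hbound
    _ ≤ 2 / m * (t - lam i) := by
      rw [mul_div_assoc', div_mul_eq_mul_div]
      gcongr

theorem stmt9 (d : ℕ) (hd : 0 < d) (K : Set (Fin d → ℝ)) (hK : IsCompact K)
    (hKpos : ∀ lam ∈ K, ∀ i, 0 < lam i) :
    ∃ L > (0 : ℝ), ∀ lam ∈ K, ∀ lam' ∈ K, ∀ q : ℝ,
      |mixCDF d lam q - mixCDF d lam' q| ≤ L * ‖lam - lam'‖ := by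
  obtain ⟨m, hm, hmK⟩ := hK.exists_pos_forall_le_apply hKpos
  refine ⟨d * (2 / m), by positivity, fun lam hlam lam' hlam' q => ?_⟩
  have h := norm_sub_le_card_mul_of_update (f := fun lam => mixCDF d lam q) (S := Set.Ici m)
    (by positivity) (fun x hx i t ht => abs_mixCDF_update_sub_le x i hm (hx i) ht q)
    (hmK lam' hlam') (hmK lam hlam)
  simpa only [Real.norm_eq_abs, Fintype.card_fin] using h
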